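/- Let q>0 with q≠1, let y>0 be fixed, and let f be a positive function on (0,∞) satisfying: (i) f(x+1) = ((1−q^x)/(1−q^{x+y})) f(x) for all x>0; (ii) f is logarithmically convex for x>M for some M≥0; (iii) f(1) = (1−q)/(1−q^y). Then f(x) = B_q(x,y) for all x>0. -/

import Mathlib

open Real Set

/-- The infinite q-Pochhammer symbol `(a;p)_∞ = ∏_{k≥0} (1 - a p^k)`. -/
noncomputable def qPochInf (a p : ℝ) : ℝ := ∏' k : ℕ, (1 - a * p ^ k)

/-- Jackson's q-gamma function for `0 < q < 1`. -/
noncomputable def qGamma (q x : ℝ) : ℝ :=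
  qPochInf q q / qPochInf (q ^ x) q * (1 - q) ^ (1 - x)

/-- The q-gamma function for `q > 1`. -/
noncomputable def qGammaBig (q x : ℝ) : ℝ :=
  qPochInf q⁻¹ q⁻¹ / qPochInf (q ^ (-x)) q⁻¹ * (q - 1) ^ (1 - x) * q ^ (x * (x - 1) / 2)

/-- The q-gamma function for any positive `q ≠ 1`. -/
noncomputable def qGammaAll (q x : ℝ) : ℝ := if q < 1 then qGamma q x else qGammaBig q x

/-- The q-beta function `B_q(x,y) = Γ_q(x)Γ_q(y)/Γ_q(x+y)`. -/
noncomputable def qBeta (q x y : ℝ) : ℝ :=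
  qGammaAll q x * qGammaAll q y / qGammaAll q (x + y)

/-!
For `0 < q < 1` this is a Bohr–Mollerup argument. Any two positive solutions of
`φ (x + 1) = r x * φ x` have a 1-periodic quotient. Convexity of `L = log f` traps
`L (x + n) - L n` between `x (L n - L (n - 1))` and `x (L (n + 1) - L n) = x log r n`, and
`log r n → 0`; for `B_q(·, y)` the same difference tends to `0` because
`B_q(t, y) → (1 - q)^y Γ_q(y)` as `t → ∞`. So the logarithm of the periodic quotient
`f / B_q` tends to `0` along `x + n`, i.e. vanishes.

For `q > 1`, `B_q(x, y) = q^(1 - x y) B_{1/q}(x, y)` and `f x * q^(x y - 1)` satisfies the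
hypotheses for `1/q`.
-/
open Filter Topology

section qPochInf

variable {a q : ℝ}

lemma summable_mul_pow (a : ℝ) (hq : |q| < 1) : Summable fun k : ℕ => a * q ^ k :=
  (summable_geometric_of_abs_lt_one hq).mul_left a

lemma multipliable_one_sub_mul_pow (a : ℝ) (hq : |q| < 1) :
    Multipliable fun k : ℕ => 1 - a * q ^ k := by
  simpa only [sub_eq_add_neg] using Real.multipliable_one_add_of_summable (summable_mul_pow a hq).neg

lemma qPochInf_eq_one_sub_mul (a : ℝ) (hq : |q| < 1) :
    qPochInf a q = (1 - a) * qPochInf (a * q) q := by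
  have hshift : ∀ k : ℕ, 1 - a * q ^ (k + 1) = 1 - a * q * q ^ k := fun k => by ring
  rw [qPochInf, tprod_eq_zero_mul' ?_, qPochInf]
  · simp only [pow_zero, mul_one, hshift]
  · simpa only [hshift] using multipliable_one_sub_mul_pow (a * q) hq

lemma qPochInf_pos (hq0 : 0 ≤ q) (hq1 : q < 1) (ha : a < 1) : 0 < qPochInf a q := by
  have hfactor : ∀ k : ℕ, 0 < 1 - a * q ^ k := fun k => by
    have hk : q ^ k ≤ 1 := pow_le_one₀ hq0 hq1.le
    rcases le_or_gt 0 a with ha0 | ha0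
    · nlinarith [mul_le_mul_of_nonneg_left hk ha0]
    · nlinarith [pow_nonneg hq0 k]
  have hlog : Summable fun k : ℕ => Real.log (1 - a * q ^ k) := by
    simpa only [sub_eq_add_neg] using Real.summable_log_one_add_of_summable
      (summable_mul_pow a (abs_lt.2 ⟨by linarith, hq1⟩)).neg
  rw [qPochInf, ← Real.rexp_tsum_eq_tprod hfactor hlog]
  exact Real.exp_pos _

lemma abs_qPochInf_sub_one_le (a : ℝ) (hq : |q| < 1) :
    |qPochInf a q - 1| ≤ Real.exp (|a| / (1 - |q|)) - 1 := by
  have hnorm : HasSum (fun k : ℕ => ‖-(a * q ^ k)‖) (|a| / (1 - |q|)) := by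
    simp only [norm_neg, norm_mul, norm_pow, Real.norm_eq_abs, div_eq_mul_inv]
    exact (hasSum_geometric_of_lt_one (abs_nonneg q) hq).mul_left |a|
  have hprod := (multipliable_one_sub_mul_pow a hq).hasProd
  simp only [sub_eq_add_neg] at hprod
  refine le_of_tendsto' ((hprod.sub_const 1).abs) fun F => ?_
  calc |∏ k ∈ F, (1 + -(a * q ^ k)) - 1| ≤ Real.exp (∑ k ∈ F, ‖-(a * q ^ k)‖) - 1 := by
        rw [← Real.norm_eq_abs]; exact Finset.norm_prod_one_add_sub_one_le F _
    _ ≤ _ := by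
        gcongr
        exact sum_le_hasSum F (fun _ _ => norm_nonneg _) hnorm

lemma tendsto_qPochInf_nhds_zero (hq : |q| < 1) :
    Tendsto (fun a => qPochInf a q) (𝓝 0) (𝓝 1) := by
  rw [tendsto_iff_norm_sub_tendsto_zero]
  refine squeeze_zero (fun _ => norm_nonneg _) (fun a => abs_qPochInf_sub_one_le a hq) ?_
  have hcont : Continuous fun a : ℝ => Real.exp (|a| / (1 - |q|)) - 1 := by fun_prop
  simpa using hcont.tendsto 0

end qPochInf

section qGamma

variable {q : ℝ}

lemma qPochInf_rpow_pos (hq0 : 0 < q) (hq1 : q < 1) {x : ℝ} (hx : 0 < x) :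
    0 < qPochInf (q ^ x) q :=
  qPochInf_pos hq0.le hq1 (Real.rpow_lt_one hq0.le hq1 hx)

lemma qGamma_pos (hq0 : 0 < q) (hq1 : q < 1) {x : ℝ} (hx : 0 < x) : 0 < qGamma q x := by
  have := qPochInf_pos hq0.le hq1 hq1
  have := qPochInf_rpow_pos hq0 hq1 hx
  have := Real.rpow_pos_of_pos (sub_pos.2 hq1) (1 - x)
  unfold qGamma
  positivity

lemma qGamma_one (hq0 : 0 < q) (hq1 : q < 1) : qGamma q 1 = 1 := by
  have := (qPochInf_pos hq0.le hq1 hq1).ne'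
  simp [qGamma, this]

lemma qGamma_add_one (hq0 : 0 < q) (hq1 : q < 1) {x : ℝ} (hx : 0 < x) :
    qGamma q (x + 1) = (1 - q ^ x) / (1 - q) * qGamma q x := by
  have hrec := qPochInf_eq_one_sub_mul (q ^ x) (abs_lt.2 ⟨by linarith, hq1⟩)
  rw [← Real.rpow_add_one hq0.ne'] at hrec
  have hpow : (1 - q) ^ (1 - x) = (1 - q) ^ (1 - (x + 1)) * (1 - q) := by
    rw [← Real.rpow_add_one (sub_pos.2 hq1).ne']; ring_nf
  have := (sub_pos.2 (Real.rpow_lt_one hq0.le hq1 hx)).ne'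
  have := (qPochInf_rpow_pos hq0 hq1 (by linarith : 0 < x + 1)).ne'
  have := (sub_pos.2 hq1).ne'
  rw [qGamma, qGamma, hrec, hpow]
  field_simp

lemma tendsto_qGamma_div_qGamma_add (hq0 : 0 < q) (hq1 : q < 1) (y : ℝ) :
    Tendsto (fun t => qGamma q t / qGamma q (t + y)) atTop (𝓝 ((1 - q) ^ y)) := by
  have hpow : Tendsto (fun t : ℝ => q ^ t) atTop (𝓝 0) :=
    tendsto_rpow_atTop_of_base_lt_one q (by linarith) hq1
  have hP : ∀ s : ℝ, Tendsto (fun t : ℝ => qPochInf (q ^ (t + s)) q) atTop (𝓝 1) := fun s =>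
    (tendsto_qPochInf_nhds_zero (abs_lt.2 ⟨by linarith, hq1⟩)).comp
      (hpow.comp (tendsto_atTop_add_const_right _ s tendsto_id))
  have hlim := ((hP y).div (by simpa using hP 0) one_ne_zero).mul_const ((1 - q) ^ y)
  rw [div_one, one_mul] at hlim
  refine hlim.congr' ?_
  filter_upwards [eventually_gt_atTop 0, eventually_gt_atTop (-y)] with t ht hty
  have := (qPochInf_pos hq0.le hq1 hq1).ne'
  have := (qPochInf_rpow_pos hq0 hq1 ht).ne'
  have := (qPochInf_rpow_pos hq0 hq1 (by linarith : 0 < t + y)).ne'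
  have h1q := sub_pos.2 hq1
  have hexp : (1 - q) ^ (1 - t) = (1 - q) ^ y * (1 - q) ^ (1 - (t + y)) := by
    rw [← Real.rpow_add h1q]; ring_nf
  have := (Real.rpow_pos_of_pos h1q (1 - (t + y))).ne'
  simp only [Pi.div_apply, qGamma, hexp]
  field_simp

end qGamma

section qBeta

variable {q y : ℝ}

lemma qBeta_of_lt_one (hq1 : q < 1) (x y : ℝ) :
    qBeta q x y = qGamma q x * qGamma q y / qGamma q (x + y) := by
  simp only [qBeta, qGammaAll, if_pos hq1]

lemma qBeta_pos (hq0 : 0 < q) (hq1 : q < 1) (hy : 0 < y) {x : ℝ} (hx : 0 < x) :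
    0 < qBeta q x y := by
  rw [qBeta_of_lt_one hq1]
  have := qGamma_pos hq0 hq1 hx
  have := qGamma_pos hq0 hq1 hy
  have := qGamma_pos hq0 hq1 (add_pos hx hy)
  positivity

lemma qBeta_one (hq0 : 0 < q) (hq1 : q < 1) (hy : 0 < y) :
    qBeta q 1 y = (1 - q) / (1 - q ^ y) := by
  have := (qGamma_pos hq0 hq1 hy).ne'
  have := (sub_pos.2 (Real.rpow_lt_one hq0.le hq1 hy)).ne'
  have := (sub_pos.2 hq1).ne'
  rw [qBeta_of_lt_one hq1, add_comm, qGamma_add_one hq0 hq1 hy, qGamma_one hq0 hq1]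
  field_simp

lemma qBeta_add_one (hq0 : 0 < q) (hq1 : q < 1) (hy : 0 < y) {x : ℝ} (hx : 0 < x) :
    qBeta q (x + 1) y = (1 - q ^ x) / (1 - q ^ (x + y)) * qBeta q x y := by
  have hxy : 0 < x + y := add_pos hx hy
  have := (qGamma_pos hq0 hq1 hxy).ne'
  have := (sub_pos.2 (Real.rpow_lt_one hq0.le hq1 hxy)).ne'
  have := (sub_pos.2 hq1).ne'
  rw [qBeta_of_lt_one hq1, qBeta_of_lt_one hq1, add_right_comm, qGamma_add_one hq0 hq1 hx,
    qGamma_add_one hq0 hq1 hxy]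
  field_simp

lemma tendsto_qBeta_atTop (hq0 : 0 < q) (hq1 : q < 1) (y : ℝ) :
    Tendsto (fun t => qBeta q t y) atTop (𝓝 ((1 - q) ^ y * qGamma q y)) := by
  simp only [qBeta_of_lt_one hq1, mul_div_right_comm]
  exact (tendsto_qGamma_div_qGamma_add hq0 hq1 y).mul_const _

lemma qGammaBig_eq_qGamma_inv (hq : 1 < q) (x : ℝ) :
    qGammaBig q x = qGamma q⁻¹ x * q ^ ((x - 1) * (x - 2) / 2) := by
  have hq0 : 0 < q := one_pos.trans hq
  have hpow : (q - 1) ^ (1 - x) = (1 - q⁻¹) ^ (1 - x) * q ^ (1 - x) := by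
    rw [← Real.mul_rpow (sub_nonneg.2 (inv_le_one_of_one_le₀ hq.le)) hq0.le]
    congr 1
    field_simp
  have hexp : q ^ (1 - x) * q ^ (x * (x - 1) / 2) = q ^ ((x - 1) * (x - 2) / 2) := by
    rw [← Real.rpow_add hq0]; ring_nf
  rw [qGammaBig, qGamma, Real.rpow_neg hq0.le, ← Real.inv_rpow hq0.le, hpow, ← hexp]
  ring

lemma qBeta_eq_qBeta_inv_mul (hq : 1 < q) (x y : ℝ) :
    qBeta q x y = qBeta q⁻¹ x y * q ^ (1 - x * y) := by
  have hq0 : 0 < q := one_pos.trans hq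
  rw [qBeta_of_lt_one (inv_lt_one_of_one_lt₀ hq), qBeta, qGammaAll, qGammaAll, qGammaAll,
    if_neg hq.not_gt, if_neg hq.not_gt, if_neg hq.not_gt, qGammaBig_eq_qGamma_inv hq,
    qGammaBig_eq_qGamma_inv hq, qGammaBig_eq_qGamma_inv hq, mul_mul_mul_comm, mul_div_mul_comm,
    ← Real.rpow_add hq0, ← Real.rpow_sub hq0]
  ring_nf

end qBeta

section BohrMollerup

lemma ConvexOn.tendsto_sub_natCast {L : ℝ → ℝ} {M ℓ : ℝ} (hL : ConvexOn ℝ (Ioi M) L)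
    (hℓ : Tendsto (fun n : ℕ => L (n + 1) - L n) atTop (𝓝 ℓ)) {x : ℝ} (hx0 : 0 < x)
    (hx1 : x < 1) : Tendsto (fun n : ℕ => L (x + n) - L n) atTop (𝓝 (x * ℓ)) := by
  have hslope : ∀ a, M + 1 < a →
      x * (L a - L (a - 1)) ≤ L (a + x) - L a ∧ L (a + x) - L a ≤ x * (L (a + 1) - L a) := by
    intro a ha
    have hmem : ∀ t ≥ -1, a + t ∈ Ioi M := fun t ht => by simp only [mem_Ioi]; linarith
    have hlow := hL.secant_mono (x := a + -1) (hmem 0 (by norm_num)) (hmem _ le_rfl)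
      (hmem x (by linarith)) (by linarith) (by linarith) (by linarith)
    have hup := hL.secant_mono (hmem 0 (by norm_num)) (hmem x (by linarith))
      (hmem 1 (by norm_num)) (by linarith) (by linarith) (by linarith)
    simp only [add_zero, add_sub_cancel_left, ← sub_eq_add_neg, sub_sub_cancel_left, div_neg,
      div_one] at hlow hup
    rw [le_div_iff₀ hx0] at hlow
    rw [div_le_iff₀ hx0] at hup
    constructor <;> linarith
  rw [← tendsto_add_atTop_iff_nat 1]
  refine tendsto_of_tendsto_of_tendsto_of_le_of_le' (hℓ.const_mul x)
    ((hℓ.comp (tendsto_add_atTop_nat 1)).const_mul x) ?_ ?_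
  all_goals
    filter_upwards [(tendsto_natCast_atTop_atTop (R := ℝ)).eventually_gt_atTop M] with n hn
    have h := hslope (n + 1) (by linarith)
    push_cast [Function.comp_apply]
    rw [add_comm x]
  · simpa using h.1
  · exact h.2

lemma eq_of_add_one_eq_mul {f g r : ℝ → ℝ} (hf : ∀ x > 0, 0 < f x) (hg : ∀ x > 0, 0 < g x)
    (hfr : ∀ x > 0, f (x + 1) = r x * f x) (hgr : ∀ x > 0, g (x + 1) = r x * g x)
    (h1 : f 1 = g 1)
    (hlim : ∀ x, 0 < x → x < 1 → Tendsto (fun n : ℕ =>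
      (Real.log (f (x + n)) - Real.log (f n)) - (Real.log (g (x + n)) - Real.log (g n)))
      atTop (𝓝 0)) :
    ∀ x > 0, f x = g x := by
  set h : ℝ → ℝ := fun x => Real.log (f x) - Real.log (g x) with h_def
  have hperiodic : ∀ x > 0, h (x + 1) = h x := fun x hx => by
    have hr : 0 < r x := pos_of_mul_pos_left (hfr x hx ▸ hf (x + 1) (by linarith)) (hf x hx).le
    simp only [h_def, hfr x hx, hgr x hx, Real.log_mul hr.ne' (hf x hx).ne',
      Real.log_mul hr.ne' (hg x hx).ne']
    ring
  have hnat : ∀ x > 0, ∀ n : ℕ, h (x + n) = h x := fun x hx n => by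
    induction n with
    | zero => simp
    | succ n ih => rw [Nat.cast_succ, ← add_assoc, hperiodic _ (by positivity), ih]
  have hone : h 1 = 0 := by simp [h_def, h1]
  have hIoo : ∀ x, 0 < x → x < 1 → h x = 0 := fun x hx0 hx1 => by
    refine tendsto_nhds_unique ?_ ((tendsto_add_atTop_iff_nat 1).2 (hlim x hx0 hx1))
    refine tendsto_const_nhds.congr fun n => ?_
    have hn : h ((n + 1 : ℕ) : ℝ) = 0 := by rw [Nat.cast_succ, add_comm, hnat 1 one_pos, hone]
    have hx := hnat x hx0 (n + 1)
    simp only [h_def] at hn hx ⊢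
    linarith
  have hIoc : ∀ n : ℕ, ∀ x : ℝ, 0 < x → x ≤ n + 1 → h x = 0 := fun n => by
    induction n with
    | zero =>
      intro x hx0 hx1
      rcases (by simpa using hx1 : x ≤ 1).lt_or_eq with hlt | rfl
      exacts [hIoo x hx0 hlt, hone]
    | succ n ih =>
      intro x hx0 hxn
      rcases le_or_gt x (n + 1) with hxn' | hxn'
      · exact ih x hx0 hxn'
      · rw [← sub_add_cancel x 1, hperiodic _ (by linarith)]
        exact ih _ (by linarith) (by push_cast at hxn; linarith)
  intro x hx
  obtain ⟨n, hn⟩ := exists_nat_ge x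
  refine Real.log_injOn_pos (hf x hx) (hg x hx) (sub_eq_zero.1 ?_)
  exact hIoc n x hx (by linarith)

end BohrMollerup

theorem eq_qBeta_of_lt_one {q y : ℝ} (hq0 : 0 < q) (hq1 : q < 1) (hy : 0 < y)
    (f : ℝ → ℝ) (hpos : ∀ x > 0, 0 < f x)
    (hfe : ∀ x > 0, f (x + 1) = (1 - q ^ x) / (1 - q ^ (x + y)) * f x)
    (M : ℝ) (hconv : ConvexOn ℝ (Ioi M) (fun x => Real.log (f x)))
    (hf1 : f 1 = (1 - q) / (1 - q ^ y)) :
    ∀ x > 0, f x = qBeta q x y := by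
  have hpow : Tendsto (fun t : ℝ => q ^ t) atTop (𝓝 0) :=
    tendsto_rpow_atTop_of_base_lt_one q (by linarith) hq1
  have hratio : Tendsto (fun t : ℝ => Real.log ((1 - q ^ t) / (1 - q ^ (t + y)))) atTop (𝓝 0) := by
    have hnum : Tendsto (fun t : ℝ => 1 - q ^ t) atTop (𝓝 1) := by
      simpa using tendsto_const_nhds.sub hpow
    have hden := hnum.comp (tendsto_atTop_add_const_right _ y tendsto_id)
    simpa using (hnum.div hden one_ne_zero).log (by norm_num)
  have hlogf : Tendsto (fun n : ℕ => Real.log (f (n + 1)) - Real.log (f n)) atTop (𝓝 0) := by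
    refine (hratio.comp tendsto_natCast_atTop_atTop).congr' ?_
    filter_upwards [eventually_gt_atTop 0] with n hn
    have hn' : (0 : ℝ) < n := Nat.cast_pos.2 hn
    have hr : 0 < (1 - q ^ (n : ℝ)) / (1 - q ^ ((n : ℝ) + y)) :=
      div_pos (sub_pos.2 (Real.rpow_lt_one hq0.le hq1 hn'))
        (sub_pos.2 (Real.rpow_lt_one hq0.le hq1 (by positivity)))
    rw [Function.comp_apply, hfe n hn', Real.log_mul hr.ne' (hpos n hn').ne']
    ring
  have hC : 0 < (1 - q) ^ y * qGamma q y :=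
    mul_pos (Real.rpow_pos_of_pos (sub_pos.2 hq1) y) (qGamma_pos hq0 hq1 hy)
  have hB := tendsto_qBeta_atTop hq0 hq1 y
  refine eq_of_add_one_eq_mul hpos (fun x hx => qBeta_pos hq0 hq1 hy hx) hfe
    (fun x hx => qBeta_add_one hq0 hq1 hy hx) (hf1.trans (qBeta_one hq0 hq1 hy).symm)
    fun x hx0 hx1 => ?_
  have hfx := hconv.tendsto_sub_natCast hlogf hx0 hx1
  have hBx := ((hB.comp (tendsto_atTop_add_const_left _ x tendsto_natCast_atTop_atTop)).log
    hC.ne').sub ((hB.comp tendsto_natCast_atTop_atTop).log hC.ne')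
  simpa using hfx.sub hBx

lemma one_sub_inv_rpow_div {q : ℝ} (hq0 : 0 < q) (x y : ℝ) :
    (1 - q⁻¹ ^ x) / (1 - q⁻¹ ^ (x + y)) = (1 - q ^ x) / (1 - q ^ (x + y)) * q ^ y := by
  have hx := (Real.rpow_pos_of_pos hq0 x).ne'
  have hy := (Real.rpow_pos_of_pos hq0 y).ne'
  rw [Real.inv_rpow hq0.le, Real.inv_rpow hq0.le, Real.rpow_add hq0]
  by_cases hxy : q ^ x * q ^ y = 1
  · simp [hxy] -- both denominators vanish
  · have : 1 - q ^ x * q ^ y ≠ 0 := sub_ne_zero.2 (Ne.symm hxy)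
    have : 1 - (q ^ x * q ^ y)⁻¹ ≠ 0 := by
      rwa [sub_ne_zero, ne_comm, inv_ne_one]
    field_simp
    ring

theorem eq_qBeta_of_one_lt {q y : ℝ} (hq : 1 < q) (hy : 0 < y)
    (f : ℝ → ℝ) (hpos : ∀ x > 0, 0 < f x)
    (hfe : ∀ x > 0, f (x + 1) = (1 - q ^ x) / (1 - q ^ (x + y)) * f x)
    (M : ℝ) (hconv : ConvexOn ℝ (Ioi M) (fun x => Real.log (f x)))
    (hf1 : f 1 = (1 - q) / (1 - q ^ y)) :
    ∀ x > 0, f x = qBeta q x y := by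
  have hq0 : 0 < q := one_pos.trans hq
  set g : ℝ → ℝ := fun x => f x * q ^ (x * y - 1) with hg
  have hgpos : ∀ x > 0, 0 < g x := fun x hx => mul_pos (hpos x hx) (Real.rpow_pos_of_pos hq0 _)
  have hgfe : ∀ x > 0, g (x + 1) = (1 - q⁻¹ ^ x) / (1 - q⁻¹ ^ (x + y)) * g x := fun x hx => by
    rw [one_sub_inv_rpow_div hq0, hg]
    simp only
    rw [hfe x hx, show (x + 1) * y - 1 = y + (x * y - 1) by ring, Real.rpow_add hq0 y]
    ring
  -- `log g = log f + affine` may fail where `f` vanishes, so stay on positive reals.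
  have hgconv : ConvexOn ℝ (Ioi (max M 0)) (fun x => Real.log (g x)) := by
    refine ((hconv.subset (Ioi_subset_Ioi (le_max_left M 0)) (convex_Ioi _)).add
      (((convexOn_id (convex_Ioi _)).smul (mul_nonneg hy.le (Real.log_nonneg hq.le))).add_const
        (-Real.log q))).congr fun x hx => ?_
    have hx0 : 0 < x := (le_max_right M 0).trans_lt hx
    simp only [hg, Pi.add_apply, id, smul_eq_mul, Real.log_mul (hpos x hx0).ne'
      (Real.rpow_pos_of_pos hq0 _).ne', Real.log_rpow hq0]
    ring
  have hg1 : g 1 = (1 - q⁻¹) / (1 - q⁻¹ ^ y) := by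
    have := one_sub_inv_rpow_div hq0 1 (y - 1)
    simp only [add_sub_cancel, Real.rpow_one] at this
    rw [this, hg]
    simp only [one_mul, hf1]
  intro x hx
  rw [qBeta_eq_qBeta_inv_mul hq, ← eq_qBeta_of_lt_one (inv_pos.2 hq0) (inv_lt_one_of_one_lt₀ hq)
    hy g hgpos hgfe _ hgconv hg1 x hx, hg, mul_assoc, ← Real.rpow_add hq0]
  rw [show x * y - 1 + (1 - x * y) = 0 by ring, Real.rpow_zero, mul_one]

theorem stmt17_general (q : ℝ) (hq0 : 0 < q) (hq1 : q ≠ 1) (y : ℝ) (hy : 0 < y)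
    (f : ℝ → ℝ) (hpos : ∀ x > 0, 0 < f x)
    (hfe : ∀ x > 0, f (x + 1) = (1 - q ^ x) / (1 - q ^ (x + y)) * f x)
    (M : ℝ)
    (hconv : ConvexOn ℝ (Ioi M) (fun x => Real.log (f x)))
    (hf1 : f 1 = (1 - q) / (1 - q ^ y)) :
    ∀ x > 0, f x = qBeta q x y := by
  rcases hq1.lt_or_gt with hlt | hgt
  · exact eq_qBeta_of_lt_one hq0 hlt hy f hpos hfe M hconv hf1
  · exact eq_qBeta_of_one_lt hgt hy f hpos hfe M hconv hf1

theorem stmt17 (q : ℝ) (hq0 : 0 < q) (hq1 : q ≠ 1) (y : ℝ) (hy : 0 < y)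
    (f : ℝ → ℝ) (hpos : ∀ x > 0, 0 < f x)
    (hfe : ∀ x > 0, f (x + 1) = (1 - q ^ x) / (1 - q ^ (x + y)) * f x)
    (M : ℝ) (hM : 0 ≤ M)
    (hconv : ConvexOn ℝ (Ioi M) (fun x => Real.log (f x)))
    (hf1 : f 1 = (1 - q) / (1 - q ^ y)) :
    ∀ x > 0, f x = qBeta q x y :=
  stmt17_general q hq0 hq1 y hy f hpos hfe M hconv hf1
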